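/- (Proposition 2) Let Π be an LP^MLN program over a finite set of atoms with SSM(Π) ≠ ∅, and let τ₂(Π) be the plingo program with hard formulas {α : F ∨ ¬F : (w : F) ∈ Π}, soft integrity constraints {w : ¬¬F : (w : F) ∈ soft(Π)}, and weak constraints {:~ F [−1, 1] : (α : F) ∈ hard(Π)}. Then for every interpretation X, the limit defining P_Π(X) exists and P_Π(X) = P''_{τ₂(Π)}(X). -/

import Mathlib

open Filter

attribute [local instance] Classical.propDecidable

/-- Propositional formulas over atoms `At`, built from atoms and `⊥`
    using `∧`, `∨`, `→`. -/
inductive Formula (At : Type) where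
  | bot  : Formula At
  | atom : At → Formula At
  | and  : Formula At → Formula At → Formula At
  | or   : Formula At → Formula At → Formula At
  | imp  : Formula At → Formula At → Formula At

namespace Formula

variable {At : Type}

/-- `¬F` abbreviates `F → ⊥`. -/
def neg (F : Formula At) : Formula At := imp F bot

/-- Classical satisfaction of a formula by an interpretation `X ⊆ At`. -/
def sat (X : Finset At) : Formula At → Prop
  | bot => False
  | atom a => a ∈ X
  | and F G => sat X F ∧ sat X G
  | or F G => sat X F ∨ sat X G
  | imp F G => sat X F → sat X G

/-- The reduct `F^X`: every maximal subformula not satisfied by `X` is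
    replaced by `⊥`. -/
noncomputable def reduct (X : Finset At) : Formula At → Formula At
  | bot => bot
  | atom a => if sat X (atom a) then atom a else bot
  | and F G => if sat X (and F G) then and (reduct X F) (reduct X G) else bot
  | or F G => if sat X (or F G) then or (reduct X F) (reduct X G) else bot
  | imp F G => if sat X (imp F G) then imp (reduct X F) (reduct X G) else bot

end Formula

variable {At : Type}

/-- `X` satisfies every formula in `Γ`. -/
def SatAll (X : Finset At) (Γ : Set (Formula At)) : Prop := ∀ F ∈ Γ, F.sat X

/-- `X` is a stable model of `Γ` (Ferraris semantics): `X` satisfies `Γ` and no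
    proper subset of `X` satisfies the reduct `Γ^X`. -/
def IsStable (X : Finset At) (Γ : Set (Formula At)) : Prop :=
  SatAll X Γ ∧ ∀ Y : Finset At, Y ⊂ X → ¬ SatAll Y (Formula.reduct X '' Γ)

/-- Weak constraint `:~ F [w, l]`. -/
structure WeakConstraint (At : Type) where
  formula : Formula At
  weight : ℝ
  level : ℕ

/-- `Cost_Ω(X, l)`: sum of the weights `w` over all `:~ F [w, l]` in `Ω` at level `l`
    whose formula is satisfied by `X`. -/
noncomputable def Cost (Ω : Finset (WeakConstraint At)) (X : Finset At) (l : ℕ) : ℝ :=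
  ∑ c ∈ Ω.filter (fun c => c.level = l ∧ c.formula.sat X), c.weight

/-- `X` is an optimal stable model of `Γ ∪ Ω`. -/
def OptStable (Γ : Set (Formula At)) (Ω : Finset (WeakConstraint At)) (X : Finset At) : Prop :=
  IsStable X Γ ∧
    ¬ ∃ Y : Finset At, IsStable Y Γ ∧ ∃ l : ℕ,
        Cost Ω Y l < Cost Ω X l ∧ ∀ l' : ℕ, l < l' → Cost Ω Y l' = Cost Ω X l'

/-- A weight is either the symbolic infinite weight `α` or a real number. -/
inductive Weight where
  | alpha : Weight
  | soft : ℝ → Weight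

/-- The real value of a weight when the real number `a` is substituted for `α`. -/
def Weight.val (a : ℝ) : Weight → ℝ
  | .alpha => a
  | .soft w => w

/-- A weighted formula `w : F`. -/
structure WFormula (At : Type) where
  weight : Weight
  formula : Formula At

/-- A hard formula `α : F`. -/
def WFormula.isHard (p : WFormula At) : Prop := p.weight = Weight.alpha

/-- A soft formula `w : F` with `w` a real number. -/
def WFormula.isSoft (p : WFormula At) : Prop := ∃ w : ℝ, p.weight = Weight.soft w

/-- `hard(Π)`. -/
noncomputable def hardPart (P : Finset (WFormula At)) : Finset (WFormula At) :=
  P.filter (fun p => p.isHard)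

/-- `soft(Π)`. -/
noncomputable def softPart (P : Finset (WFormula At)) : Finset (WFormula At) :=
  P.filter (fun p => p.isSoft)

/-- `Π_X`: the weighted formulas of `Π` whose formula is satisfied by `X`. -/
noncomputable def satPart (P : Finset (WFormula At)) (X : Finset At) : Finset (WFormula At) :=
  P.filter (fun p => p.formula.sat X)

/-- `SSM(Π)`: the soft stable models of the LP^MLN program `Π`. -/
def SSM (P : Finset (WFormula At)) : Set (Finset At) :=
  { X | IsStable X (WFormula.formula '' (↑(satPart P X) : Set (WFormula At))) }

/-- `W_Π(X, a)`. -/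
noncomputable def Wgt (P : Finset (WFormula At)) (X : Finset At) (a : ℝ) : ℝ :=
  if X ∈ SSM P then Real.exp (∑ p ∈ satPart P X, p.weight.val a) else 0

/-- The quotient whose limit as `a → ∞` defines `P_Π(X)`. -/
noncomputable def ratio [Fintype At] (P : Finset (WFormula At)) (X : Finset At) (a : ℝ) : ℝ :=
  Wgt P X a / ∑ Y ∈ Finset.univ.filter (fun Y => Y ∈ SSM P), Wgt P Y a

/-- `SSM'(Π)`: soft stable models satisfying all hard formulas. -/
def SSM' (P : Finset (WFormula At)) : Set (Finset At) :=
  { X | X ∈ SSM P ∧ ∀ p ∈ P, p.isHard → p.formula.sat X }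

/-- `W'_Π(X)` (alternative semantics). -/
noncomputable def Wgt' (P : Finset (WFormula At)) (X : Finset At) : ℝ :=
  if X ∈ SSM' P then
    Real.exp (∑ p ∈ (softPart P).filter (fun p => p.formula.sat X), p.weight.val 0)
  else 0

/-- `P'_Π(X)` (alternative semantics). -/
noncomputable def Pr' [Fintype At] (P : Finset (WFormula At)) (X : Finset At) : ℝ :=
  Wgt' P X / ∑ Y : Finset At, Wgt' P Y

/-- A plingo program: hard formulas, soft integrity constraints (a real weight
    together with the constraint formula), and weak constraints. -/
structure PlingoProgram (At : Type) where
  hard : Finset (Formula At)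
  soft : Finset (ℝ × Formula At)
  weak : Finset (WeakConstraint At)

/-- `OSM(Π)`: optimal stable models of `hard(Π) ∪ weak(Π)`. -/
def OSM (P : PlingoProgram At) : Set (Finset At) :=
  { X | OptStable (↑P.hard) P.weak X }

/-- `W''_Π(X)`. -/
noncomputable def Wgt'' (P : PlingoProgram At) (X : Finset At) : ℝ :=
  if X ∈ OSM P then Real.exp (∑ p ∈ P.soft.filter (fun p => p.2.sat X), p.1) else 0

/-- `P''_Π(X)`. -/
noncomputable def Pr'' [Fintype At] (P : PlingoProgram At) (X : Finset At) : ℝ :=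
  Wgt'' P X / ∑ Y ∈ Finset.univ.filter (fun Y => Y ∈ OSM P), Wgt'' P Y

/-- The translation `τ₂`: hard formulas `{α : F ∨ ¬F : (w : F) ∈ Π}`, soft integrity
    constraints `{w : ¬¬F : (w : F) ∈ soft(Π)}`, and weak constraints
    `{:~ F [−1, 1] : (α : F) ∈ hard(Π)}`. -/
noncomputable def tau2 {At : Type} (P : Finset (WFormula At)) : PlingoProgram At where
  hard := P.image (fun p => (p.formula).or p.formula.neg)
  soft := (softPart P).image (fun p => (p.weight.val 0, p.formula.neg.neg))
  weak := (hardPart P).image (fun p => ⟨p.formula, -1, 1⟩)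

/-!
The choice rules `F ∨ ¬F` of `τ₂(Π)` make its stable models exactly the soft stable models of
`Π`, and its weak constraints at level 1 keep those satisfying the largest number `k(X)` of hard
formulas. A soft stable model `X` has weight `exp (k(X) * a + s(X))`, where `s(X)` is its soft
weight, so after dividing by `exp (a * max k)` the normalized weights converge, as `a → ∞`, to
`exp (s(X))` on the maximizers of `k` and to `0` elsewhere; this is `P''_{τ₂(Π)}`.
-/

open Real Topology

theorem tendsto_exp_mul_add_of_nonpos {c : ℝ} (hc : c ≤ 0) (s : ℝ) :
    Tendsto (fun a : ℝ => exp (c * a + s)) atTop (𝓝 (if c = 0 then exp s else 0)) := by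
  split_ifs with h
  · simp [h]
  · have hc' : c < 0 := lt_of_le_of_ne hc h
    exact tendsto_exp_atBot.comp
      (tendsto_atBot_add_const_right _ s ((tendsto_const_mul_atBot_of_neg hc').2 tendsto_id))

theorem tendsto_exp_div_sum_exp {ι : Type*} {D : Finset ι} {x : ι} (hx : x ∈ D)
    (k s : ι → ℝ) :
    Tendsto (fun a : ℝ => exp (k x * a + s x) / ∑ y ∈ D, exp (k y * a + s y)) atTop
      (𝓝 ((if ∀ z ∈ D, k z ≤ k x then exp (s x) else 0) /
        ∑ y ∈ D with ∀ z ∈ D, k z ≤ k y, exp (s y))) := by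
  obtain ⟨m, hm, hmax⟩ := D.exists_max_image k ⟨x, hx⟩
  have hlim : ∀ y ∈ D, Tendsto (fun a : ℝ => exp (k y * a + s y) * exp (-(k m * a))) atTop
      (𝓝 (if ∀ z ∈ D, k z ≤ k y then exp (s y) else 0)) := by
    intro y hy
    have hmax_iff : (∀ z ∈ D, k z ≤ k y) ↔ k y - k m = 0 :=
      ⟨fun h => by linarith [hmax y hy, h m hm], fun h z hz => by linarith [hmax z hz]⟩
    simp_rw [← exp_add, hmax_iff]
    convert tendsto_exp_mul_add_of_nonpos (sub_nonpos.2 (hmax y hy)) (s y) using 3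
    ring
  have hden := tendsto_finsetSum D hlim
  rw [← Finset.sum_filter] at hden
  have hpos : 0 < ∑ y ∈ D with ∀ z ∈ D, k z ≤ k y, exp (s y) :=
    Finset.sum_pos (fun y _ => exp_pos _) ⟨m, Finset.mem_filter.2 ⟨hm, hmax⟩⟩
  refine ((hlim x hx).div hden hpos.ne').congr fun a => ?_
  simp only [Pi.div_apply, ← Finset.sum_mul, mul_div_mul_right _ _ (exp_ne_zero _)]

namespace Formula

theorem sat_neg {X : Finset At} {F : Formula At} : F.neg.sat X ↔ ¬ F.sat X := Iff.rfl

theorem reduct_of_not_sat {X : Finset At} {F : Formula At} (h : ¬ F.sat X) :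
    reduct X F = bot := by
  cases F <;> simp [reduct, h]

theorem sat_reduct_or_neg {X Y : Finset At} (F : Formula At) :
    (reduct X (F.or F.neg)).sat Y ↔ (F.sat X → (reduct X F).sat Y) := by
  by_cases hF : F.sat X
  · have hneg : ¬ F.neg.sat X := not_not.2 hF
    simp [reduct, sat, hF, reduct_of_not_sat hneg]
  · simp [neg, reduct, sat, hF, reduct_of_not_sat hF]

end Formula

theorem isStable_image_or_neg_iff {X : Finset At} {Γ : Set (Formula At)} :
    IsStable X ((fun F => F.or F.neg) '' Γ) ↔ IsStable X {F ∈ Γ | F.sat X} := by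
  have hreduct : ∀ Y, SatAll Y (Formula.reduct X '' ((fun F => F.or F.neg) '' Γ)) ↔
      SatAll Y (Formula.reduct X '' {F ∈ Γ | F.sat X}) := fun Y => by
    simp only [SatAll, Set.forall_mem_image, Formula.sat_reduct_or_neg, Set.mem_ofPred_eq, and_imp]
  have hsat : SatAll X ((fun F => F.or F.neg) '' Γ) := by
    simp only [SatAll, Set.forall_mem_image]
    exact fun F _ => em _
  simp only [IsStable, hreduct]
  exact ⟨fun h => ⟨fun F hF => hF.2, h.2⟩, fun h => ⟨hsat, h.2⟩⟩

theorem isStable_tau2_hard_iff (P : Finset (WFormula At)) (X : Finset At) :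
    IsStable X ↑(tau2 P).hard ↔ X ∈ SSM P := by
  have hhard : (↑(tau2 P).hard : Set (Formula At)) =
      (fun F => F.or F.neg) '' (WFormula.formula '' ↑P) := by
    simp only [tau2, Finset.coe_image, Set.image_image]
  have hsat : WFormula.formula '' (↑(satPart P X) : Set (WFormula At)) =
      {F ∈ WFormula.formula '' ↑P | F.sat X} := by
    ext F
    simp only [satPart, Finset.coe_filter, Set.mem_image, Set.mem_ofPred_eq]
    grind
  rw [hhard, isStable_image_or_neg_iff, SSM, Set.mem_ofPred_eq, hsat]

noncomputable def hardCount (P : Finset (WFormula At)) (X : Finset At) : ℕ :=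
  (Finset.filter (fun p => p.formula.sat X) (hardPart P)).card

noncomputable def softWeight (P : Finset (WFormula At)) (X : Finset At) : ℝ :=
  ∑ p ∈ softPart P with p.formula.sat X, p.weight.val 0

theorem Weight.val_eq_ite_add_val_zero (a : ℝ) (w : Weight) :
    w.val a = (if w = .alpha then a else 0) + w.val 0 := by
  cases w <;> simp [Weight.val]

theorem WFormula.isSoft_iff_not_isHard {p : WFormula At} : p.isSoft ↔ ¬ p.isHard := by
  obtain ⟨w, F⟩ := p
  cases w <;> simp [WFormula.isHard, WFormula.isSoft]

theorem sum_satPart_weight_val (P : Finset (WFormula At)) (X : Finset At) (a : ℝ) :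
    ∑ p ∈ satPart P X, p.weight.val a = hardCount P X * a + softWeight P X := by
  have hhard : ∑ p ∈ satPart P X, (if p.weight = .alpha then a else 0) = hardCount P X * a := by
    rw [← Finset.sum_filter, Finset.sum_const, nsmul_eq_mul, hardCount, satPart, hardPart,
      Finset.filter_comm]
    rfl
  have hsoft : ∑ p ∈ satPart P X, p.weight.val 0 = softWeight P X := by
    rw [softWeight, softPart, Finset.filter_comm, ← satPart]
    refine (Finset.sum_filter_of_ne fun p _ hp => ?_).symm
    rw [WFormula.isSoft_iff_not_isHard, WFormula.isHard]
    exact fun h => hp (by rw [h]; rfl)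
  rw [Finset.sum_congr rfl fun p _ => Weight.val_eq_ite_add_val_zero a p.weight,
    Finset.sum_add_distrib, hhard, hsoft]

theorem Wgt_of_mem_SSM (P : Finset (WFormula At)) {X : Finset At} (hX : X ∈ SSM P) (a : ℝ) :
    Wgt P X a = exp (hardCount P X * a + softWeight P X) := by
  rw [Wgt, if_pos hX, sum_satPart_weight_val]

theorem cost_tau2_weak (P : Finset (WFormula At)) (X : Finset At) (l : ℕ) :
    Cost (tau2 P).weak X l = if l = 1 then -(hardCount P X : ℝ) else 0 := by
  have hinj : Set.InjOn (fun p : WFormula At => (⟨p.formula, -1, 1⟩ : WeakConstraint At))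
      ↑(hardPart P) := by
    intro p hp q hq hpq
    rw [Finset.mem_coe, hardPart, Finset.mem_filter] at hp hq
    cases p; cases q
    simp_all [WFormula.isHard]
  rw [Cost, tau2, Finset.sum_filter, Finset.sum_image hinj]
  split_ifs with hl
  · simp [hl, Finset.sum_ite, hardCount]
  · simp [Ne.symm hl]

theorem mem_OSM_tau2_iff (P : Finset (WFormula At)) (X : Finset At) :
    X ∈ OSM (tau2 P) ↔ X ∈ SSM P ∧ ∀ Y ∈ SSM P, hardCount P Y ≤ hardCount P X := by
  simp only [OSM, Set.mem_ofPred_eq, OptStable, isStable_tau2_hard_iff, cost_tau2_weak]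
  refine and_congr_right fun _ => ⟨fun h Y hY => ?_, ?_⟩
  · by_contra hlt
    refine h ⟨Y, hY, 1, ?_, fun l hl => ?_⟩
    · simpa using hlt
    · simp [show l ≠ 1 by omega]
  · rintro hmax ⟨Y, hY, l, hlt, -⟩
    split_ifs at hlt
    · simpa using (neg_lt_neg_iff.1 hlt).trans_le (Nat.cast_le.2 (hmax Y hY))
    · exact lt_irrefl _ hlt

theorem Wgt''_tau2_eq (P : Finset (WFormula At)) (X : Finset At) :
    Wgt'' (tau2 P) X = if X ∈ OSM (tau2 P) then exp (softWeight P X) else 0 := by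
  have hinj : Set.InjOn (fun p : WFormula At => (p.weight.val 0, p.formula.neg.neg))
      ↑(softPart P) := by
    rintro ⟨v, F⟩ hp ⟨v', G⟩ hq hpq
    rw [Finset.mem_coe, softPart, Finset.mem_filter] at hp hq
    obtain ⟨-, w, rfl : v = _⟩ := hp
    obtain ⟨-, w', rfl : v' = _⟩ := hq
    simp_all [Weight.val, Formula.neg]
  rw [Wgt'', tau2, Finset.sum_filter, Finset.sum_image hinj, softWeight, Finset.sum_filter]
  simp only [Formula.sat_neg, not_not]

theorem lpmln_prob_eq_tau2_prob_general {At : Type} [Fintype At] (P : Finset (WFormula At))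
    (X : Finset At) :
    Tendsto (fun a : ℝ => ratio P X a) atTop (nhds (Pr'' (tau2 P) X)) := by
  by_cases hX : X ∈ SSM P
  · have hlim := tendsto_exp_div_sum_exp (D := Finset.univ.filter (· ∈ SSM P))
      (Finset.mem_filter.2 ⟨Finset.mem_univ X, hX⟩) (fun Y => hardCount P Y) (softWeight P)
    convert hlim using 2 with a
    · rw [ratio, Wgt_of_mem_SSM P hX]
      exact congrArg _ (Finset.sum_congr rfl fun Y hY =>
        Wgt_of_mem_SSM P (Finset.mem_filter.1 hY).2 a)
    · simp only [Pr'', Wgt''_tau2_eq,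
        Finset.sum_ite_of_true fun _ hY => (Finset.mem_filter.1 hY).2]
      simp [mem_OSM_tau2_iff, Finset.filter_filter, hX]
  · have hOSM : X ∉ OSM (tau2 P) := fun h => hX ((mem_OSM_tau2_iff P X).1 h).1
    simp [ratio, Wgt, Pr'', Wgt''_tau2_eq, hX, hOSM]

/-- Proposition 2: if `SSM(Π) ≠ ∅` then for every interpretation `X`
    the limit defining `P_Π(X)` exists and equals `P''_{τ₂(Π)}(X)`. -/
theorem lpmln_prob_eq_tau2_prob {At : Type} [Fintype At] (P : Finset (WFormula At))
    (h : (SSM P).Nonempty) (X : Finset At) :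
    Tendsto (fun a : ℝ => ratio P X a) atTop (nhds (Pr'' (tau2 P) X)) :=
  lpmln_prob_eq_tau2_prob_general P X
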